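/- arXiv:1103.4518 — 4 statements merged into one kernel-verified Lean document; each statement's English description precedes it below -/
import Mathlib

section
/- For every centrally symmetric convex domain K in the plane, the supremum δ_lat(K) of densities of lattice packings of K is attained: there exists a lattice Λ ⊆ ℝ² such that Λ + K is a packing of K and vol(K)/covol(Λ) = δ_lat(K). -/
open MeasureTheory

noncomputable section

def wedge (v w : ℝ × ℝ) : ℝ := v.1 * w.2 - v.2 * w.1

def IsCSCD (K : Set (ℝ × ℝ)) : Prop :=
  Convex ℝ K ∧ IsCompact K ∧ (interior K).Nonempty ∧ K = -K

def latticeOf (v w : ℝ × ℝ) : Set (ℝ × ℝ) :=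
  {p | ∃ m n : ℤ, p = (m : ℝ) • v + (n : ℝ) • w}

def IsPacking (K Λ : Set (ℝ × ℝ)) : Prop :=
  ∀ p ∈ Λ, ∀ q ∈ Λ, p ≠ q →
    interior ((fun x => p + x) '' K) ∩ interior ((fun x => q + x) '' K) = ∅

def packingDensities (K : Set (ℝ × ℝ)) : Set ℝ :=
  {d | ∃ v w : ℝ × ℝ, wedge v w ≠ 0 ∧ IsPacking K (latticeOf v w) ∧
       d = (volume K).toReal / |wedge v w|}

def deltaLat (K : Set (ℝ × ℝ)) : ℝ := sSup (packingDensities K)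

/-! ### Auxiliary definitions -/

/-- Squared euclidean norm. -/
def N2 (v : ℝ × ℝ) : ℝ := v.1 ^ 2 + v.2 ^ 2

lemma smul_pair (c : ℝ) (v : ℝ × ℝ) : c • v = (c * v.1, c * v.2) := rfl

lemma pair_comp (m n : ℝ) (v w : ℝ × ℝ) :
    m • v + n • w = (m * v.1 + n * w.1, m * v.2 + n * w.2) := rfl

lemma N2_nonneg (v : ℝ × ℝ) : 0 ≤ N2 v := by unfold N2; positivity

lemma lagrange (a b : ℝ × ℝ) :
    (wedge a b) ^ 2 + (a.1 * b.1 + a.2 * b.2) ^ 2 = N2 a * N2 b := by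
  simp only [wedge, N2]; ring

lemma norm_sq_le_N2 (v : ℝ × ℝ) : ‖v‖ ^ 2 ≤ N2 v := by
  rcases abs_cases v.1 with ⟨h1, _⟩ | ⟨h1, _⟩ <;>
  rcases abs_cases v.2 with ⟨h2, _⟩ | ⟨h2, _⟩ <;>
  · simp only [Prod.norm_def, Real.norm_eq_abs, N2]
    rcases max_cases |v.1| |v.2| with ⟨h, _⟩ | ⟨h, _⟩ <;> rw [h] <;> nlinarith [sq_nonneg v.1, sq_nonneg v.2]

/-- wedge of integer-combination. -/
lemma wedge_combo (m n p q : ℝ) (v w : ℝ × ℝ) :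
    wedge (m • v + n • w) (p • v + q • w) = (m * q - n * p) * wedge v w := by
  simp only [pair_comp, wedge]; ring

lemma mem_latticeOf (v w : ℝ × ℝ) (m n : ℤ) : (m : ℝ) • v + (n : ℝ) • w ∈ latticeOf v w :=
  ⟨m, n, rfl⟩

lemma zero_mem_latticeOf (v w : ℝ × ℝ) : (0 : ℝ × ℝ) ∈ latticeOf v w :=
  ⟨0, 0, by simp⟩

/-- independence from nonzero wedge -/
lemma indep_of_wedge (v w : ℝ × ℝ) (hW : wedge v w ≠ 0) (x y : ℝ)
    (h : x • v + y • w = 0) : x = 0 ∧ y = 0 := by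
  rw [pair_comp] at h
  have h1 := congrArg Prod.fst h
  have h2 := congrArg Prod.snd h
  simp only [wedge] at hW
  simp only [Prod.fst_zero, Prod.snd_zero] at h1 h2
  constructor
  · by_contra hx
    apply hW
    have : x * (v.1 * w.2 - v.2 * w.1) = 0 := by linear_combination w.2 * h1 - w.1 * h2
    exact by
      rcases mul_eq_zero.mp this with h | h
      · exact absurd h hx
      · exact h
  · by_contra hy
    apply hW
    have : y * (v.1 * w.2 - v.2 * w.1) = 0 := by linear_combination v.1 * h2 - v.2 * h1
    rcases mul_eq_zero.mp this with h | h
    · exact absurd h hy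
    · exact h

/-- integer vector in the lattice -/
def vecc (v w : ℝ × ℝ) (mn : ℤ × ℤ) : ℝ × ℝ := (mn.1 : ℝ) • v + (mn.2 : ℝ) • w

lemma vecc_mem (v w : ℝ × ℝ) (mn : ℤ × ℤ) : vecc v w mn ∈ latticeOf v w :=
  ⟨mn.1, mn.2, rfl⟩

def uni (u : (ℤ × ℤ) × (ℤ × ℤ)) : Prop :=
  u.1.1 * u.2.2 - u.1.2 * u.2.1 = 1 ∨ u.1.1 * u.2.2 - u.1.2 * u.2.1 = -1

/-- integer combination of lattice vectors -/
lemma combo_combo (α β m n p q : ℤ) (v w : ℝ × ℝ) :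
    (α : ℝ) • vecc v w (m, n) + (β : ℝ) • vecc v w (p, q) =
      vecc v w (α * m + β * p, α * n + β * q) := by
  simp only [vecc, pair_comp, smul_pair, Prod.mk_add_mk, Prod.mk.injEq]
  push_cast
  constructor <;> ring

lemma latticeOf_uni (v w : ℝ × ℝ) (u : (ℤ × ℤ) × (ℤ × ℤ)) (hu : uni u) :
    latticeOf (vecc v w u.1) (vecc v w u.2) = latticeOf v w := by
  obtain ⟨⟨m, n⟩, ⟨p, q⟩⟩ := u
  ext x
  constructor
  · rintro ⟨s, t, rfl⟩
    rw [show vecc v w (m, n) = (m:ℝ) • v + (n:ℝ) • w from rfl,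
        show vecc v w (p, q) = (p:ℝ) • v + (q:ℝ) • w from rfl]
    refine ⟨s * m + t * p, s * n + t * q, ?_⟩
    simp only [pair_comp, smul_pair, Prod.mk_add_mk, Prod.mk.injEq]
    push_cast
    constructor <;> ring
  · rintro ⟨s, t, rfl⟩
    rcases hu with hd | hd
    · have hd2 : m * q - n * p = 1 := hd
      have hd' : (m:ℝ) * q - (n:ℝ) * p = 1 := by exact_mod_cast hd2
      refine ⟨s * q - t * p, t * m - s * n, ?_⟩
      simp only [vecc, pair_comp, smul_pair, Prod.mk_add_mk, Prod.mk.injEq]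
      push_cast
      constructor
      · linear_combination (-(s * v.1 + t * w.1)) * hd'
      · linear_combination (-(s * v.2 + t * w.2)) * hd'
    · have hd2 : m * q - n * p = -1 := hd
      have hd' : (m:ℝ) * q - (n:ℝ) * p = -1 := by exact_mod_cast hd2
      refine ⟨t * p - s * q, s * n - t * m, ?_⟩
      simp only [vecc, pair_comp, smul_pair, Prod.mk_add_mk, Prod.mk.injEq]
      push_cast
      constructor
      · linear_combination (s * v.1 + t * w.1) * hd'
      · linear_combination (s * v.2 + t * w.2) * hd'

lemma wedge_vecc (v w : ℝ × ℝ) (u : (ℤ × ℤ) × (ℤ × ℤ)) :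
    wedge (vecc v w u.1) (vecc v w u.2) =
      ((u.1.1 * u.2.2 - u.1.2 * u.2.1 : ℤ) : ℝ) * wedge v w := by
  obtain ⟨⟨m, n⟩, ⟨p, q⟩⟩ := u
  rw [show vecc v w (m, n) = (m:ℝ) • v + (n:ℝ) • w from rfl,
      show vecc v w (p, q) = (p:ℝ) • v + (q:ℝ) • w from rfl, wedge_combo]
  push_cast; ring

lemma abs_wedge_uni (v w : ℝ × ℝ) (u : (ℤ × ℤ) × (ℤ × ℤ)) (hu : uni u) :
    |wedge (vecc v w u.1) (vecc v w u.2)| = |wedge v w| := by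
  rw [wedge_vecc]
  rcases hu with hd | hd <;> rw [hd] <;> simp [abs_mul]

lemma wedge_vecc_right (v w : ℝ × ℝ) (m n : ℤ) :
    wedge (vecc v w (m, n)) w = (m : ℝ) * wedge v w := by
  simp only [vecc, pair_comp, wedge]; ring

lemma wedge_vecc_left (v w : ℝ × ℝ) (m n : ℤ) :
    wedge v (vecc v w (m, n)) = (n : ℝ) * wedge v w := by
  simp only [vecc, pair_comp, wedge]; ring

lemma wedge_sq_le (a b : ℝ × ℝ) : (wedge a b) ^ 2 ≤ N2 a * N2 b := by
  nlinarith [lagrange a b, sq_nonneg (a.1 * b.1 + a.2 * b.2)]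

lemma int_bound_of_sq (k : ℤ) (C : ℝ) (hC : 1 ≤ C) (h : (k : ℝ) ^ 2 ≤ C) :
    -⌈C⌉ ≤ k ∧ k ≤ ⌈C⌉ := by
  have habs : |(k : ℝ)| ≤ C := by
    rcases le_or_gt 1 |(k : ℝ)| with h1 | h1
    · nlinarith [sq_abs (k : ℝ)]
    · linarith
  rw [abs_le] at habs
  have hceil := Int.le_ceil C
  constructor
  · exact_mod_cast (by push_cast; linarith : ((-⌈C⌉ : ℤ) : ℝ) ≤ (k : ℝ))
  · exact_mod_cast (by push_cast; linarith : ((k : ℝ)) ≤ ((⌈C⌉ : ℤ) : ℝ))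

/-- Existence of a minimal (Gauss-reduced) basis among unimodular transforms. -/
lemma exists_min_basis (v w : ℝ × ℝ) (hW : wedge v w ≠ 0) :
    ∃ u : (ℤ × ℤ) × (ℤ × ℤ), uni u ∧ ∀ u', uni u' →
      N2 (vecc v w u.1) + N2 (vecc v w u.2) ≤ N2 (vecc v w u'.1) + N2 (vecc v w u'.2) := by
  set g : (ℤ × ℤ) × (ℤ × ℤ) → ℝ := fun u => N2 (vecc v w u.1) + N2 (vecc v w u.2) with hg
  set u₀ : (ℤ × ℤ) × (ℤ × ℤ) := ((1, 0), (0, 1)) with hu₀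
  have hu₀uni : uni u₀ := Or.inl (by norm_num [uni])
  set B : ℝ := g u₀ with hB
  have hBnn : 0 ≤ B := add_nonneg (N2_nonneg _) (N2_nonneg _)
  set s : Set ((ℤ × ℤ) × (ℤ × ℤ)) := {u | uni u ∧ g u ≤ B} with hs
  have hWsq : 0 < wedge v w ^ 2 := by positivity
  set C : ℝ := B * (N2 v + N2 w) / wedge v w ^ 2 + 1 with hC
  have hC1 : 1 ≤ C := by
    have : 0 ≤ B * (N2 v + N2 w) / wedge v w ^ 2 :=
      div_nonneg (mul_nonneg hBnn (add_nonneg (N2_nonneg _) (N2_nonneg _))) (le_of_lt hWsq)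
    rw [hC]; linarith
  set M : ℤ := ⌈C⌉ with hM
  have key : ∀ (mn : ℤ × ℤ), N2 (vecc v w mn) ≤ B → (-M, -M) ≤ mn ∧ mn ≤ (M, M) := by
    rintro ⟨m, n⟩ hN
    have h1 : ((m : ℝ)) ^ 2 * wedge v w ^ 2 ≤ B * (N2 v + N2 w) := by
      have := wedge_sq_le (vecc v w (m, n)) w
      rw [wedge_vecc_right v w m n] at this
      nlinarith [N2_nonneg w, N2_nonneg v, N2_nonneg (vecc v w (m, n))]
    have h2 : ((n : ℝ)) ^ 2 * wedge v w ^ 2 ≤ B * (N2 v + N2 w) := by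
      have := wedge_sq_le v (vecc v w (m, n))
      rw [wedge_vecc_left v w m n] at this
      nlinarith [N2_nonneg w, N2_nonneg v, N2_nonneg (vecc v w (m, n))]
    have hm : (m : ℝ) ^ 2 ≤ C := by
      rw [hC]
      rw [← le_div_iff₀ hWsq] at h1
      linarith
    have hn : (n : ℝ) ^ 2 ≤ C := by
      rw [hC]
      rw [← le_div_iff₀ hWsq] at h2
      linarith
    obtain ⟨hm1, hm2⟩ := int_bound_of_sq m C hC1 hm
    obtain ⟨hn1, hn2⟩ := int_bound_of_sq n C hC1 hn
    exact ⟨⟨hm1, hn1⟩, ⟨hm2, hn2⟩⟩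
  have hfin : s.Finite := by
    apply Set.Finite.subset (Set.finite_Icc ((-M, -M), (-M, -M)) ((M, M), (M, M)))
    rintro ⟨mn, pq⟩ ⟨_, hgu⟩
    have hmn : N2 (vecc v w mn) ≤ B := by
      have := N2_nonneg (vecc v w pq); simp only [hg] at hgu; linarith
    have hpq : N2 (vecc v w pq) ≤ B := by
      have := N2_nonneg (vecc v w mn); simp only [hg] at hgu; linarith
    obtain ⟨ha1, ha2⟩ := key mn hmn
    obtain ⟨hb1, hb2⟩ := key pq hpq
    exact ⟨⟨ha1, hb1⟩, ⟨ha2, hb2⟩⟩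
  have hne : s.Nonempty := ⟨u₀, hu₀uni, le_refl _⟩
  obtain ⟨u, hus, humin⟩ := Set.exists_min_image s g hfin hne
  refine ⟨u, hus.1, fun u' hu' => ?_⟩
  rcases le_or_gt (g u') B with h | h
  · exact humin u' ⟨hu', h⟩
  · exact le_trans (le_trans hus.2 h.le) (le_refl _)

lemma vecc_add (v w : ℝ × ℝ) (a b : ℤ × ℤ) :
    vecc v w (a + b) = vecc v w a + vecc v w b := by
  simp only [vecc, Prod.fst_add, Prod.snd_add, pair_comp, Prod.mk_add_mk, Prod.mk.injEq]
  push_cast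
  constructor <;> ring

lemma vecc_sub (v w : ℝ × ℝ) (a b : ℤ × ℤ) :
    vecc v w (a - b) = vecc v w a - vecc v w b := by
  simp only [vecc, Prod.fst_sub, Prod.snd_sub, pair_comp, Prod.mk_sub_mk, Prod.mk.injEq]
  push_cast
  constructor <;> ring

/-- Reduction: every lattice basis can be replaced by a Gauss-reduced one. -/
lemma exists_reduced (v w : ℝ × ℝ) (hW : wedge v w ≠ 0) :
    ∃ a b : ℝ × ℝ, latticeOf a b = latticeOf v w ∧ |wedge a b| = |wedge v w| ∧
      a ∈ latticeOf v w ∧ b ∈ latticeOf v w ∧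
      3 * (N2 a * N2 b) ≤ 4 * (wedge a b) ^ 2 := by
  obtain ⟨u, huni, hmin⟩ := exists_min_basis v w hW
  obtain ⟨mn, pq⟩ := u
  set a : ℝ × ℝ := vecc v w mn with ha
  set b : ℝ × ℝ := vecc v w pq with hb
  have hd : mn.1 * pq.2 - mn.2 * pq.1 = 1 ∨ mn.1 * pq.2 - mn.2 * pq.1 = -1 := huni
  refine ⟨a, b, latticeOf_uni v w (mn, pq) huni, abs_wedge_uni v w (mn, pq) huni,
    vecc_mem v w mn, vecc_mem v w pq, ?_⟩
  -- neighbors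
  have h1 : N2 a ≤ N2 (a + b) := by
    have huni' : uni (mn + pq, pq) := by
      rcases hd with h | h
      · left; simp only [Prod.fst_add, Prod.snd_add]; linarith
      · right; simp only [Prod.fst_add, Prod.snd_add]; linarith
    have := hmin (mn + pq, pq) huni'
    simp only [vecc_add] at this
    rw [← ha, ← hb] at this
    linarith
  have h2 : N2 a ≤ N2 (a - b) := by
    have huni' : uni (mn - pq, pq) := by
      rcases hd with h | h
      · left; simp only [Prod.fst_sub, Prod.snd_sub]; linarith
      · right; simp only [Prod.fst_sub, Prod.snd_sub]; linarith
    have := hmin (mn - pq, pq) huni'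
    simp only [vecc_sub] at this
    rw [← ha, ← hb] at this
    linarith
  have h3 : N2 b ≤ N2 (b + a) := by
    have huni' : uni (mn, pq + mn) := by
      rcases hd with h | h
      · left; simp only [Prod.fst_add, Prod.snd_add]; linarith
      · right; simp only [Prod.fst_add, Prod.snd_add]; linarith
    have := hmin (mn, pq + mn) huni'
    simp only [vecc_add] at this
    rw [← ha, ← hb] at this
    linarith
  have h4 : N2 b ≤ N2 (b - a) := by
    have huni' : uni (mn, pq - mn) := by
      rcases hd with h | h
      · left; simp only [Prod.fst_sub, Prod.snd_sub]; linarith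
      · right; simp only [Prod.fst_sub, Prod.snd_sub]; linarith
    have := hmin (mn, pq - mn) huni'
    simp only [vecc_sub] at this
    rw [← ha, ← hb] at this
    linarith
  -- now pure algebra
  set ip : ℝ := a.1 * b.1 + a.2 * b.2 with hip
  have e1 : N2 (a + b) = N2 a + N2 b + 2 * ip := by
    simp only [N2, Prod.fst_add, Prod.snd_add, hip]; ring
  have e2 : N2 (a - b) = N2 a + N2 b - 2 * ip := by
    simp only [N2, Prod.fst_sub, Prod.snd_sub, hip]; ring
  have e3 : N2 (b + a) = N2 a + N2 b + 2 * ip := by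
    simp only [N2, Prod.fst_add, Prod.snd_add, hip]; ring
  have e4 : N2 (b - a) = N2 a + N2 b - 2 * ip := by
    simp only [N2, Prod.fst_sub, Prod.snd_sub, hip]; ring
  have k1 : 2 * ip ≥ -(N2 b) := by rw [e1] at h1; linarith
  have k2 : 2 * ip ≤ N2 b := by rw [e2] at h2; linarith
  have k3 : 2 * ip ≥ -(N2 a) := by rw [e3] at h3; linarith
  have k4 : 2 * ip ≤ N2 a := by rw [e4] at h4; linarith
  have hsq : 4 * ip ^ 2 ≤ N2 a * N2 b := by nlinarith [N2_nonneg a, N2_nonneg b]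
  have hlag := lagrange a b
  rw [← hip] at hlag
  nlinarith

open Pointwise in
/-- Admissibility: no nontrivial lattice vector in `interior K + interior K`. -/
def Adm (K : Set (ℝ × ℝ)) (v w : ℝ × ℝ) : Prop :=
  ∀ m n : ℤ, ¬(m = 0 ∧ n = 0) → (m : ℝ) • v + (n : ℝ) • w ∉ interior K + interior K

open Pointwise

lemma pair_ext_arith {x y : ℝ × ℝ} (h1 : x.1 = y.1) (h2 : x.2 = y.2) : x = y :=
  Prod.ext h1 h2

lemma interior_translate (p : ℝ × ℝ) (K : Set (ℝ × ℝ)) :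
    interior ((fun x => p + x) '' K) = (fun x => p + x) '' interior K :=
  ((Homeomorph.addLeft p).image_interior K).symm

lemma interior_symm {K : Set (ℝ × ℝ)} (hsymm : K = -K) {x : ℝ × ℝ}
    (hx : x ∈ interior K) : -x ∈ interior K := by
  have himg : (fun y : ℝ × ℝ => -y) '' interior K = interior ((fun y : ℝ × ℝ => -y) '' K) :=
    (Homeomorph.neg (ℝ × ℝ)).image_interior K
  have hKimg : (fun y : ℝ × ℝ => -y) '' K = K := by
    conv_rhs => rw [hsymm]
    ext z
    simp [Set.mem_neg, Set.mem_image]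
  rw [hKimg] at himg
  rw [← himg]
  exact ⟨x, hx, rfl⟩

lemma packing_of_adm {K : Set (ℝ × ℝ)} (hsymm : K = -K) (v w : ℝ × ℝ)
    (hA : Adm K v w) : IsPacking K (latticeOf v w) := by
  rintro p ⟨m, n, rfl⟩ q ⟨m', n', rfl⟩ hpq
  set p : ℝ × ℝ := (m : ℝ) • v + (n : ℝ) • w with hpdef
  set q : ℝ × ℝ := (m' : ℝ) • v + (n' : ℝ) • w with hqdef
  by_contra hne
  obtain ⟨x, hx1, hx2⟩ := Set.nonempty_iff_ne_empty.mpr hne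
  rw [interior_translate] at hx1 hx2
  obtain ⟨y1, hy1, hxy1⟩ := hx1
  obtain ⟨y2, hy2, hxy2⟩ := hx2
  have hx : p + y1 = q + y2 := hxy1.trans hxy2.symm
  have hkey : q - p = y1 + -y2 := by
    have h1 := congrArg Prod.fst hx
    have h2 := congrArg Prod.snd hx
    simp only [Prod.fst_add, Prod.snd_add] at h1 h2
    apply pair_ext_arith <;>
      simp only [Prod.fst_sub, Prod.snd_sub, Prod.fst_add, Prod.snd_add,
        Prod.fst_neg, Prod.snd_neg] <;> linarith
  have hmem : q - p ∈ interior K + interior K := by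
    rw [hkey]; exact Set.add_mem_add hy1 (interior_symm hsymm hy2)
  have hcoeff : ¬(m' - m = 0 ∧ n' - n = 0) := by
    rintro ⟨h1, h2⟩
    apply hpq
    have hm : m' = m := by omega
    have hn : n' = n := by omega
    rw [hpdef, hqdef, hm, hn]
  apply hA (m' - m) (n' - n) hcoeff
  have : ((m' - m : ℤ) : ℝ) • v + ((n' - n : ℤ) : ℝ) • w = q - p := by
    rw [hpdef, hqdef]; push_cast; module
  rw [this]
  exact hmem

lemma adm_of_packing {K : Set (ℝ × ℝ)} (hsymm : K = -K) (v w : ℝ × ℝ) (hW : wedge v w ≠ 0)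
    (hP : IsPacking K (latticeOf v w)) : Adm K v w := by
  intro m n hmn
  intro hmem
  set p : ℝ × ℝ := (m : ℝ) • v + (n : ℝ) • w with hp
  have hpne : p ≠ 0 := by
    intro h0
    obtain ⟨hm, hn⟩ := indep_of_wedge v w hW _ _ h0
    exact hmn ⟨by exact_mod_cast hm, by exact_mod_cast hn⟩
  obtain ⟨y1, hy1, y2, hy2, hsum⟩ := hmem
  have h0mem := zero_mem_latticeOf v w
  have hpmem : p ∈ latticeOf v w := ⟨m, n, rfl⟩
  have hdisj := hP 0 h0mem p hpmem (Ne.symm hpne)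
  rw [Set.eq_empty_iff_forall_notMem] at hdisj
  apply hdisj y1
  constructor
  · rw [interior_translate]
    exact ⟨y1, hy1, by simp⟩
  · rw [interior_translate]
    refine ⟨-y2, interior_symm hsymm hy2, ?_⟩
    have h1 := congrArg Prod.fst hsum
    have h2 := congrArg Prod.snd hsum
    simp only [Prod.fst_add, Prod.snd_add] at h1 h2
    apply pair_ext_arith <;>
      simp only [Prod.fst_add, Prod.snd_add, Prod.fst_neg, Prod.snd_neg] <;> linarith

lemma wedge_zero_left (b : ℝ × ℝ) : wedge 0 b = 0 := by simp [wedge]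

lemma adm_congr {K : Set (ℝ × ℝ)} {a b v w : ℝ × ℝ} (hlat : latticeOf a b = latticeOf v w)
    (hWab : wedge a b ≠ 0) (hA : Adm K v w) : Adm K a b := by
  intro m n hmn hmem
  have hp : (m : ℝ) • a + (n : ℝ) • b ∈ latticeOf v w := hlat ▸ mem_latticeOf a b m n
  obtain ⟨m', n', he⟩ := hp
  have hpne : (m : ℝ) • a + (n : ℝ) • b ≠ 0 := by
    intro h0
    obtain ⟨hm, hn⟩ := indep_of_wedge a b hWab _ _ h0
    exact hmn ⟨by exact_mod_cast hm, by exact_mod_cast hn⟩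
  have hmn' : ¬(m' = 0 ∧ n' = 0) := by
    rintro ⟨rfl, rfl⟩
    apply hpne
    rw [he]; simp
  exact hA m' n' hmn' (he ▸ hmem)

lemma adm_norm_lb {K : Set (ℝ × ℝ)} {r : ℝ} (h0 : (0 : ℝ × ℝ) ∈ interior K)
    (hball : Metric.ball (0 : ℝ × ℝ) r ⊆ interior K) {v w : ℝ × ℝ} (hA : Adm K v w)
    {a : ℝ × ℝ} (ha : a ∈ latticeOf v w) (hane : a ≠ 0) : r ≤ ‖a‖ := by
  obtain ⟨m, n, rfl⟩ := ha
  have hmn : ¬(m = 0 ∧ n = 0) := by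
    rintro ⟨rfl, rfl⟩; simp at hane
  by_contra h
  push_neg at h
  refine hA m n hmn ⟨_, hball ?_, 0, h0, add_zero _⟩
  rw [Metric.mem_ball, dist_zero_right]
  exact h

set_option maxHeartbeats 2000000 in
/-- For every centrally symmetric convex domain `K` in the plane, the supremum
`δ_lat(K)` of densities of lattice packings of `K` is attained by some lattice. -/
theorem deltaLat_attained (K : Set (ℝ × ℝ)) (hK : IsCSCD K) :
    ∃ v w : ℝ × ℝ, wedge v w ≠ 0 ∧ IsPacking K (latticeOf v w) ∧
      (volume K).toReal / |wedge v w| = deltaLat K := by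
  obtain ⟨hconv, hcomp, hint, hsymm⟩ := hK
  set V : ℝ := (volume K).toReal with hV
  have hVnn : 0 ≤ V := ENNReal.toReal_nonneg
  -- 0 is an interior point
  obtain ⟨x₀, hx₀⟩ := hint
  have h0 : (0 : ℝ × ℝ) ∈ interior K := by
    have hx₀' : -x₀ ∈ interior K := interior_symm hsymm hx₀
    have hconv' : Convex ℝ (interior K) := hconv.interior
    have hmem := hconv' hx₀ hx₀' (by norm_num : (0:ℝ) ≤ 1/2) (by norm_num : (0:ℝ) ≤ 1/2)
      (by norm_num)
    have : (1/2 : ℝ) • x₀ + (1/2 : ℝ) • (-x₀) = 0 := by module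
    rwa [this] at hmem
  -- inner radius r
  obtain ⟨r, hr, hball⟩ := Metric.isOpen_iff.mp isOpen_interior 0 h0
  -- outer radius ρ
  obtain ⟨ρ, hρ⟩ := hcomp.isBounded.subset_closedBall 0
  have hrρ : r ≤ 2 * ρ := by
    have hz : ((r/2, 0) : ℝ × ℝ) ∈ Metric.ball (0 : ℝ × ℝ) r := by
      rw [Metric.mem_ball, dist_zero_right, Prod.norm_def]
      simp only [norm_zero]
      rw [Real.norm_eq_abs, abs_of_nonneg (by linarith)]
      simp only [max_eq_left (by linarith : (0:ℝ) ≤ r/2)]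
      linarith
    have := hρ (interior_subset (hball hz))
    rw [Metric.mem_closedBall, dist_zero_right, Prod.norm_def] at this
    simp only [norm_zero] at this
    rw [Real.norm_eq_abs, abs_of_nonneg (by linarith)] at this
    rw [max_eq_left (by linarith : (0:ℝ) ≤ r/2)] at this
    linarith
  set c : ℝ := 2 * ρ + 1 with hc
  have hc0 : 0 < c := by linarith
  have hrc : r ≤ c := by linarith
  set R : ℝ := 2 * c ^ 2 / r with hR
  have hR0 : 0 < R := by positivity
  set ε : ℝ := r ^ 2 / 2 with hε
  have hε0 : 0 < ε := by positivity
  -- S is open and bounded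
  have hSopen : IsOpen (interior K + interior K) := IsOpen.add_left isOpen_interior
  have hSbd : ∀ x ∈ interior K + interior K, ‖x‖ ≤ 2 * ρ := by
    rintro x ⟨a, ha, b, hb, rfl⟩
    have h1 := hρ (interior_subset ha)
    have h2 := hρ (interior_subset hb)
    rw [Metric.mem_closedBall, dist_zero_right] at h1 h2
    calc ‖a + b‖ ≤ ‖a‖ + ‖b‖ := norm_add_le a b
      _ ≤ 2 * ρ := by linarith
  -- the compact search region
  set T : Set ((ℝ × ℝ) × (ℝ × ℝ)) :=
    {vw | ‖vw.1‖ ≤ R ∧ ‖vw.2‖ ≤ R ∧ ε ≤ |wedge vw.1 vw.2| ∧ Adm K vw.1 vw.2} with hT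
  have hwcont : Continuous (fun vw : (ℝ × ℝ) × (ℝ × ℝ) => |wedge vw.1 vw.2|) := by
    unfold wedge; fun_prop
  have hTclosed : IsClosed T := by
    have h1 : IsClosed {vw : (ℝ × ℝ) × (ℝ × ℝ) | ‖vw.1‖ ≤ R} :=
      isClosed_le (continuous_fst.norm) continuous_const
    have h2 : IsClosed {vw : (ℝ × ℝ) × (ℝ × ℝ) | ‖vw.2‖ ≤ R} :=
      isClosed_le (continuous_snd.norm) continuous_const
    have h3 : IsClosed {vw : (ℝ × ℝ) × (ℝ × ℝ) | ε ≤ |wedge vw.1 vw.2|} :=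
      isClosed_le continuous_const hwcont
    have h4 : IsClosed {vw : (ℝ × ℝ) × (ℝ × ℝ) | Adm K vw.1 vw.2} := by
      have heq : {vw : (ℝ × ℝ) × (ℝ × ℝ) | Adm K vw.1 vw.2} =
          ⋂ (mn : ℤ × ℤ), {vw : (ℝ × ℝ) × (ℝ × ℝ) |
            ¬(mn.1 = 0 ∧ mn.2 = 0) →
              ((mn.1 : ℝ) • vw.1 + (mn.2 : ℝ) • vw.2) ∉ interior K + interior K} := by
        ext vw
        simp only [Set.mem_setOf_eq, Set.mem_iInter]
        constructor
        · intro h mn; exact h mn.1 mn.2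
        · intro h m n; exact h (m, n)
      rw [heq]
      apply isClosed_iInter
      intro mn
      by_cases hz : mn.1 = 0 ∧ mn.2 = 0
      · simp [hz]
      · have : {vw : (ℝ × ℝ) × (ℝ × ℝ) |
            ¬(mn.1 = 0 ∧ mn.2 = 0) →
              ((mn.1 : ℝ) • vw.1 + (mn.2 : ℝ) • vw.2) ∉ interior K + interior K} =
            (fun vw : (ℝ × ℝ) × (ℝ × ℝ) => (mn.1 : ℝ) • vw.1 + (mn.2 : ℝ) • vw.2) ⁻¹'
              (interior K + interior K)ᶜ := by
          ext vw
          simp [hz]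
        rw [this]
        exact (hSopen.isClosed_compl).preimage (by fun_prop)
    have hTeq : T = ({vw : (ℝ × ℝ) × (ℝ × ℝ) | ‖vw.1‖ ≤ R} ∩
        {vw | ‖vw.2‖ ≤ R} ∩ {vw | ε ≤ |wedge vw.1 vw.2|} ∩ {vw | Adm K vw.1 vw.2}) := by
      ext vw
      simp only [hT, Set.mem_setOf_eq, Set.mem_inter_iff]
      tauto
    rw [hTeq]
    exact ((h1.inter h2).inter h3).inter h4
  have hTbdd : Bornology.IsBounded T := by
    apply (Metric.isBounded_closedBall (x := (0 : (ℝ × ℝ) × (ℝ × ℝ))) (r := R)).subset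
    rintro vw ⟨hv, hw, -, -⟩
    rw [Metric.mem_closedBall, dist_zero_right, Prod.norm_def]
    exact max_le hv hw
  have hTcompact : IsCompact T := Metric.isCompact_iff_isClosed_bounded.mpr ⟨hTclosed, hTbdd⟩
  -- base element of T
  have hAdm_base : Adm K (c, 0) (0, c) := by
    intro m n hmn hmem
    have hnorm := hSbd _ hmem
    have hpt : (m : ℝ) • ((c, 0) : ℝ × ℝ) + (n : ℝ) • ((0, c) : ℝ × ℝ)
        = ((m : ℝ) * c, (n : ℝ) * c) := by
      rw [pair_comp]; simp
    rw [hpt, Prod.norm_def, Real.norm_eq_abs, Real.norm_eq_abs] at hnorm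
    have hcle : c ≤ max |(m : ℝ) * c| |(n : ℝ) * c| := by
      rcases Decidable.not_and_iff_or_not.mp hmn with hm | hn
      · have h1 : (1 : ℝ) ≤ |(m : ℝ)| := by exact_mod_cast Int.one_le_abs (by omega)
        calc c = 1 * c := (one_mul c).symm
          _ ≤ |(m : ℝ)| * c := by nlinarith
          _ = |(m : ℝ) * c| := by rw [abs_mul, abs_of_pos hc0]
          _ ≤ _ := le_max_left _ _
      · have h1 : (1 : ℝ) ≤ |(n : ℝ)| := by exact_mod_cast Int.one_le_abs (by omega)
        calc c = 1 * c := (one_mul c).symm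
          _ ≤ |(n : ℝ)| * c := by nlinarith
          _ = |(n : ℝ) * c| := by rw [abs_mul, abs_of_pos hc0]
          _ ≤ _ := le_max_right _ _
    have : c ≤ 2 * ρ := le_trans hcle hnorm
    rw [hc] at this
    linarith
  have hwbase : |wedge ((c, 0) : ℝ × ℝ) ((0, c) : ℝ × ℝ)| = c ^ 2 := by
    simp only [wedge]
    rw [abs_of_nonneg (by nlinarith)]
    ring
  have hbase_mem : (((c, 0) : ℝ × ℝ), ((0, c) : ℝ × ℝ)) ∈ T := by
    refine ⟨?_, ?_, ?_, hAdm_base⟩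
    · rw [Prod.norm_def]
      simp only [Real.norm_eq_abs, abs_of_pos hc0, norm_zero]
      rw [max_eq_left hc0.le, hR, le_div_iff₀ hr]
      nlinarith
    · rw [Prod.norm_def]
      simp only [Real.norm_eq_abs, abs_of_pos hc0, norm_zero]
      rw [max_eq_right hc0.le, hR, le_div_iff₀ hr]
      nlinarith
    · rw [hwbase, hε]
      nlinarith
  -- minimize the covolume over T
  obtain ⟨vw, hvwT, hvwmin⟩ := hTcompact.exists_isMinOn ⟨_, hbase_mem⟩ hwcont.continuousOn
  have hmin := isMinOn_iff.mp hvwmin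
  obtain ⟨hv1, hv2, hvε, hvA⟩ := hvwT
  have hWs0 : wedge vw.1 vw.2 ≠ 0 := by
    intro h; rw [h, abs_zero] at hvε; linarith
  have hWspos : 0 < |wedge vw.1 vw.2| := lt_of_lt_of_le hε0 hvε
  have hpack : IsPacking K (latticeOf vw.1 vw.2) := packing_of_adm hsymm _ _ hvA
  refine ⟨vw.1, vw.2, hWs0, hpack, ?_⟩
  rw [deltaLat]
  symm
  apply IsGreatest.csSup_eq
  constructor
  · exact ⟨vw.1, vw.2, hWs0, hpack, rfl⟩
  · rintro d ⟨v, w, hW, hP, rfl⟩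
    have hA := adm_of_packing hsymm v w hW hP
    have hkey : |wedge vw.1 vw.2| ≤ |wedge v w| := by
      by_contra hlt
      push_neg at hlt
      have hub : |wedge vw.1 vw.2| ≤ c ^ 2 := by
        have := hmin _ hbase_mem
        simpa [hwbase] using this
      obtain ⟨a, b, hlat, habs, haL, hbL, hineq⟩ := exists_reduced v w hW
      have hWab : wedge a b ≠ 0 := by
        intro h; rw [h, abs_zero] at habs; exact hW (abs_eq_zero.mp habs.symm)
      have hane : a ≠ 0 := by rintro rfl; exact hWab (wedge_zero_left b)
      have hbne : b ≠ 0 := by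
        rintro rfl; apply hWab; simp [wedge]
      have hna : r ≤ ‖a‖ := adm_norm_lb h0 hball hA haL hane
      have hnb : r ≤ ‖b‖ := adm_norm_lb h0 hball hA hbL hbne
      have hN2a : r ^ 2 ≤ N2 a :=
        le_trans (by nlinarith [norm_nonneg a]) (norm_sq_le_N2 a)
      have hN2b : r ^ 2 ≤ N2 b :=
        le_trans (by nlinarith [norm_nonneg b]) (norm_sq_le_N2 b)
      have hwlt : |wedge a b| < c ^ 2 := by rw [habs]; exact lt_of_lt_of_le hlt hub
      have hsq : wedge a b ^ 2 < c ^ 4 := by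
        have h1 : |wedge a b| ^ 2 < (c ^ 2) ^ 2 := by
          nlinarith [abs_nonneg (wedge a b)]
        calc wedge a b ^ 2 = |wedge a b| ^ 2 := (sq_abs _).symm
          _ < (c ^ 2) ^ 2 := h1
          _ = c ^ 4 := by ring
      have haR : ‖a‖ ≤ R := by
        have h2 : ‖a‖ ^ 2 ≤ R ^ 2 := by
          have hn2 := norm_sq_le_N2 a
          rw [hR, div_pow, le_div_iff₀ (by positivity)]
          nlinarith
        nlinarith [norm_nonneg a, hR0]
      have hbR : ‖b‖ ≤ R := by
        have h2 : ‖b‖ ^ 2 ≤ R ^ 2 := by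
          have hn2 := norm_sq_le_N2 b
          rw [hR, div_pow, le_div_iff₀ (by positivity)]
          nlinarith
        nlinarith [norm_nonneg b, hR0]
      have habε : ε ≤ |wedge a b| := by
        have h1 : ε ^ 2 ≤ wedge a b ^ 2 := by
          rw [hε]; nlinarith
        nlinarith [abs_nonneg (wedge a b), sq_abs (wedge a b), hε0.le]
      have hmemT : ((a, b) : (ℝ × ℝ) × (ℝ × ℝ)) ∈ T :=
        ⟨haR, hbR, habε, adm_congr hlat hWab hA⟩
      have hle := hmin _ hmemT
      simp only at hle
      rw [habs] at hle
      exact absurd (lt_of_le_of_lt hle hlt) (lt_irrefl _)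
    exact div_le_div_of_nonneg_left hVnn hWspos hkey
end
end

section
/- There exists a centrally symmetric convex domain K₀ in the plane realizing the lower bound δ_min: that is, δ_lat(K₀) ≤ δ_lat(K) for every centrally symmetric convex domain K. -/
open MeasureTheory

noncomputable section

/-!
`δ_lat` is invariant under linear automorphisms, and every centrally symmetric convex domain `K`
has a linear image lying between the balls of radii `1/2` and `1`
(the squares `[-1/2, 1/2]²` and `[-1, 1]²`): send two points of `K` spanning a parallelogram of
maximal area to the standard basis. Among compact sets with the Hausdorff metric these normalized
domains form a compact family (Blaschke selection). On it `δ_lat` is continuous: by Blichfeldt's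
theorem every packing density is at most `1`, and mutual inclusions `A ⊆ c • B`, `B ⊆ c • A`
give `δ_lat(A) ≤ c⁴ δ_lat(B)`. Hence `δ_lat` attains its minimum on the family.
-/

open MeasureTheory Set Metric TopologicalSpace
open scoped Pointwise

lemma det_eq_wedge (T : (ℝ × ℝ) →ₗ[ℝ] ℝ × ℝ) : LinearMap.det T = wedge (T (1, 0)) (T (0, 1)) := by
  rw [← LinearMap.det_toMatrix (Module.Basis.finTwoProd ℝ), Matrix.det_fin_two]
  simp only [LinearMap.toMatrix_apply, Module.Basis.finTwoProd_zero, Module.Basis.finTwoProd_one,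
    Module.Basis.coe_finTwoProd_repr, Matrix.cons_val_zero, Matrix.cons_val_one,
    Matrix.cons_val_fin_one, wedge]
  ring

lemma wedge_map (T : (ℝ × ℝ) →ₗ[ℝ] ℝ × ℝ) (v w : ℝ × ℝ) :
    wedge (T v) (T w) = LinearMap.det T * wedge v w := by
  have hT : ∀ u : ℝ × ℝ, T u = u.1 • T (1, 0) + u.2 • T (0, 1) := fun u => by
    rw [← map_smul, ← map_smul, ← map_add]; simp
  rw [det_eq_wedge, hT v, hT w]
  simp only [wedge, Prod.fst_add, Prod.snd_add, Prod.smul_fst, Prod.smul_snd, smul_eq_mul]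
  ring

def pairMap (v w : ℝ × ℝ) : (ℝ × ℝ) →ₗ[ℝ] ℝ × ℝ :=
  (LinearMap.fst ℝ ℝ ℝ).smulRight v + (LinearMap.snd ℝ ℝ ℝ).smulRight w

@[simp]
lemma pairMap_apply (v w p : ℝ × ℝ) : pairMap v w p = p.1 • v + p.2 • w := rfl

lemma det_pairMap (v w : ℝ × ℝ) : LinearMap.det (pairMap v w) = wedge v w := by
  simp [det_eq_wedge]

def pairEquiv (v w : ℝ × ℝ) (h : wedge v w ≠ 0) : (ℝ × ℝ) ≃ₗ[ℝ] ℝ × ℝ :=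
  (pairMap v w).equivOfDetNeZero (by rwa [det_pairMap])

@[simp]
lemma pairEquiv_apply (v w : ℝ × ℝ) (h : wedge v w ≠ 0) (p : ℝ × ℝ) :
    pairEquiv v w h p = p.1 • v + p.2 • w := by
  simp [pairEquiv]

@[simp]
lemma coe_pairEquiv (v w : ℝ × ℝ) (h : wedge v w ≠ 0) :
    (pairEquiv v w h : (ℝ × ℝ) →ₗ[ℝ] ℝ × ℝ) = pairMap v w := by
  ext <;> simp

def latticeBasis (v w : ℝ × ℝ) (h : wedge v w ≠ 0) : Module.Basis (Fin 2) ℝ (ℝ × ℝ) :=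
  (Module.Basis.finTwoProd ℝ).map (pairEquiv v w h)

lemma range_latticeBasis (v w : ℝ × ℝ) (h : wedge v w ≠ 0) :
    range (latticeBasis v w h) = {v, w} := by
  simp [latticeBasis, range, Fin.exists_fin_two, Set.ext_iff, eq_comm]

lemma latticeOf_eq_span (v w : ℝ × ℝ) (h : wedge v w ≠ 0) :
    latticeOf v w = Submodule.span ℤ (range (latticeBasis v w h)) := by
  ext x
  simp [range_latticeBasis, latticeOf, Submodule.mem_span_pair, eq_comm, Int.cast_smul_eq_zsmul]

lemma volume_fundamentalDomain_latticeBasis (v w : ℝ × ℝ) (h : wedge v w ≠ 0) :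
    volume (ZSpan.fundamentalDomain (latticeBasis v w h)) = ENNReal.ofReal |wedge v w| := by
  have hunit : ZSpan.fundamentalDomain (Module.Basis.finTwoProd ℝ) = Ico (0 : ℝ) 1 ×ˢ Ico 0 1 := by
    ext p
    simp [ZSpan.mem_fundamentalDomain, Fin.forall_fin_two]
  rw [latticeBasis, ← ZSpan.map_fundamentalDomain, ← LinearEquiv.coe_coe,
    Measure.addHaar_image_linearMap, hunit, Measure.volume_eq_prod, Measure.prod_prod]
  simp [det_pairMap]

lemma isPacking_iff_disjoint {K Λ : Set (ℝ × ℝ)} :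
    IsPacking K Λ ↔ ∀ p ∈ Λ, ∀ q ∈ Λ, p ≠ q → Disjoint (p +ᵥ interior K) (q +ᵥ interior K) := by
  simp only [IsPacking, ← vadd_eq_add, image_vadd, interior_vadd, Set.disjoint_iff_inter_eq_empty]

lemma IsPacking.mono {K K' Λ : Set (ℝ × ℝ)} (hp : IsPacking K Λ) (hK : K' ⊆ K) :
    IsPacking K' Λ := by
  rw [isPacking_iff_disjoint] at hp ⊢
  exact fun p hp' q hq hpq =>
    (hp p hp' q hq hpq).mono (vadd_set_mono (interior_mono hK)) (vadd_set_mono (interior_mono hK))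

/-- Blichfeldt's theorem applied to the interior of `K`, whose boundary is null by convexity. -/
lemma volume_le_abs_wedge_of_isPacking {K : Set (ℝ × ℝ)} (hK : Convex ℝ K) {v w : ℝ × ℝ}
    (h : wedge v w ≠ 0) (hp : IsPacking K (latticeOf v w)) :
    volume K ≤ ENNReal.ofReal |wedge v w| := by
  by_contra! hlt
  have : Countable (Submodule.span ℤ (range (latticeBasis v w h))).toAddSubgroup :=
    inferInstanceAs (Countable (Submodule.span ℤ (range (latticeBasis v w h))))
  have hint : volume (interior K) = volume K :=
    measure_interior_of_null_frontier (hK.addHaar_frontier volume)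
  obtain ⟨x, y, hxy, hdisj⟩ := exists_pair_mem_lattice_not_disjoint_vadd
    (ZSpan.isAddFundamentalDomain' (latticeBasis v w h) volume)
    isOpen_interior.measurableSet.nullMeasurableSet
    (by rwa [hint, volume_fundamentalDomain_latticeBasis])
  have hmem : ∀ z : (Submodule.span ℤ (range (latticeBasis v w h))).toAddSubgroup,
      (z : ℝ × ℝ) ∈ latticeOf v w := fun z => by
    rw [latticeOf_eq_span v w h]; exact z.2
  exact hdisj (isPacking_iff_disjoint.mp hp x (hmem x) y (hmem y) (Subtype.coe_injective.ne hxy))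

lemma nonneg_of_mem_packingDensities {K : Set (ℝ × ℝ)} {d : ℝ} (hd : d ∈ packingDensities K) :
    0 ≤ d := by
  obtain ⟨v, w, -, -, rfl⟩ := hd
  positivity

lemma le_one_of_mem_packingDensities {K : Set (ℝ × ℝ)} (hK : Convex ℝ K) {d : ℝ}
    (hd : d ∈ packingDensities K) : d ≤ 1 := by
  obtain ⟨v, w, h, hp, rfl⟩ := hd
  rw [div_le_one (abs_pos.mpr h)]
  exact ENNReal.toReal_le_of_le_ofReal (abs_nonneg _) (volume_le_abs_wedge_of_isPacking hK h hp)

lemma bddAbove_packingDensities {K : Set (ℝ × ℝ)} (hK : Convex ℝ K) :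
    BddAbove (packingDensities K) :=
  ⟨1, fun _ => le_one_of_mem_packingDensities hK⟩

lemma deltaLat_nonneg (K : Set (ℝ × ℝ)) : 0 ≤ deltaLat K :=
  Real.sSup_nonneg fun _ => nonneg_of_mem_packingDensities

lemma deltaLat_le_one {K : Set (ℝ × ℝ)} (hK : Convex ℝ K) : deltaLat K ≤ 1 :=
  Real.sSup_le (fun _ => le_one_of_mem_packingDensities hK) zero_le_one

section LinearInvariance

variable (T : (ℝ × ℝ) ≃ₗ[ℝ] ℝ × ℝ)

lemma image_latticeOf (v w : ℝ × ℝ) : T '' latticeOf v w = latticeOf (T v) (T w) := by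
  ext x
  simp only [latticeOf, mem_image, mem_ofPred_eq]
  constructor
  · rintro ⟨_, ⟨m, n, rfl⟩, rfl⟩
    exact ⟨m, n, by simp⟩
  · rintro ⟨m, n, rfl⟩
    exact ⟨_, ⟨m, n, rfl⟩, by simp⟩

lemma interior_image_linearEquiv (s : Set (ℝ × ℝ)) : interior (T '' s) = T '' interior s :=
  T.toContinuousLinearEquiv.toHomeomorph.image_interior s |>.symm

lemma IsPacking.image {K Λ : Set (ℝ × ℝ)} (hp : IsPacking K Λ) : IsPacking (T '' K) (T '' Λ) := by
  rw [isPacking_iff_disjoint] at hp ⊢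
  rintro _ ⟨p, hp', rfl⟩ _ ⟨q, hq, rfl⟩ hpq
  have hvadd : ∀ r, T r +ᵥ interior (T '' K) = T '' (r +ᵥ interior K) := fun r => by
    rw [interior_image_linearEquiv, ← image_vadd, ← image_vadd, image_image, image_image]
    simp
  rw [hvadd, hvadd, disjoint_image_iff T.injective]
  exact hp p hp' q hq (ne_of_apply_ne T hpq)

lemma packingDensities_subset_image (K : Set (ℝ × ℝ)) :
    packingDensities K ⊆ packingDensities (T '' K) := by
  rintro _ ⟨v, w, h, hp, rfl⟩
  have hdet : LinearMap.det (T : (ℝ × ℝ) →ₗ[ℝ] ℝ × ℝ) ≠ 0 := T.isUnit_det'.ne_zero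
  refine ⟨T v, T w, ?_, image_latticeOf T v w ▸ hp.image T, ?_⟩
  · rw [← LinearEquiv.coe_coe, wedge_map]
    exact mul_ne_zero hdet h
  · rw [← LinearEquiv.coe_coe, wedge_map, Measure.addHaar_image_linearMap, ENNReal.toReal_mul,
      ENNReal.toReal_ofReal (abs_nonneg _), abs_mul, mul_div_mul_left _ _ (abs_ne_zero.mpr hdet)]

lemma deltaLat_image (K : Set (ℝ × ℝ)) : deltaLat (T '' K) = deltaLat K := by
  refine congrArg sSup ((packingDensities_subset_image T K).antisymm' ?_)
  simpa [image_image] using packingDensities_subset_image T.symm (T '' K)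

end LinearInvariance

lemma volume_smul_eq_sq_mul (c : ℝ) (s : Set (ℝ × ℝ)) :
    volume (c • s) = ENNReal.ofReal (c ^ 2) * volume s := by
  simp [Measure.addHaar_smul, sq_abs]

/-- A packing lattice of `A`, scaled by `c`, packs `B`, while `vol A ≤ c² vol B`. -/
lemma deltaLat_le_pow_four_mul {A B : Set (ℝ × ℝ)} (hB : Convex ℝ B)
    (hBb : Bornology.IsBounded B) {c : ℝ} (hc : 0 < c) (hAB : A ⊆ c • B) (hBA : B ⊆ c • A) :
    deltaLat A ≤ c ^ 4 * deltaLat B := by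
  refine Real.sSup_le ?_ (by have := deltaLat_nonneg B; positivity)
  rintro _ ⟨v, w, h, hp, rfl⟩
  have hwedge : wedge (c • v) (c • w) = c ^ 2 * wedge v w := by
    simp only [wedge, Prod.smul_fst, Prod.smul_snd, smul_eq_mul]; ring
  have hpB : IsPacking B (latticeOf (c • v) (c • w)) := by
    have hcA := hp.image (LinearEquiv.smulOfNeZero ℝ (ℝ × ℝ) c hc.ne')
    rw [image_latticeOf] at hcA
    change IsPacking ((fun x : ℝ × ℝ => c • x) '' A) (latticeOf (c • v) (c • w)) at hcA
    rw [image_smul] at hcA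
    exact hcA.mono hBA
  have hmem : (volume B).toReal / |wedge (c • v) (c • w)| ∈ packingDensities B :=
    ⟨c • v, c • w, by rw [hwedge]; positivity, hpB, rfl⟩
  have hvol : (volume A).toReal ≤ c ^ 2 * (volume B).toReal := by
    rw [← ENNReal.toReal_ofReal (by positivity : 0 ≤ c ^ 2), ← ENNReal.toReal_mul,
      ← volume_smul_eq_sq_mul]
    exact ENNReal.toReal_mono (hBb.smul₀ c).measure_lt_top.ne (measure_mono hAB)
  calc (volume A).toReal / |wedge v w|
      ≤ c ^ 2 * (volume B).toReal / |wedge v w| := by gcongr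
    _ = c ^ 4 * ((volume B).toReal / |wedge (c • v) (c • w)|) := by
        rw [hwedge, abs_mul, abs_of_pos (by positivity : 0 < c ^ 2)]
        field_simp
    _ ≤ c ^ 4 * deltaLat B := by
        gcongr
        exact le_csSup (bddAbove_packingDensities hB) hmem

lemma IsCSCD.zero_mem_interior {K : Set (ℝ × ℝ)} (hK : IsCSCD K) : (0 : ℝ × ℝ) ∈ interior K := by
  obtain ⟨hconv, -, ⟨z, hz⟩, hsymm⟩ := hK
  have hz' : -z ∈ interior K := by
    rw [hsymm, ← image_neg_eq_neg, ← Homeomorph.coe_neg, ← Homeomorph.image_interior,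
      Homeomorph.coe_neg, image_neg_eq_neg]
    simpa using hz
  simpa using hconv.interior hz hz' one_half_pos.le one_half_pos.le (add_halves 1)

lemma IsCSCD.image {K : Set (ℝ × ℝ)} (hK : IsCSCD K) (T : (ℝ × ℝ) ≃ₗ[ℝ] ℝ × ℝ) :
    IsCSCD (T '' K) := by
  obtain ⟨hconv, hcomp, hint, hsymm⟩ := hK
  refine ⟨hconv.linear_image (T : (ℝ × ℝ) →ₗ[ℝ] ℝ × ℝ),
    hcomp.image T.toContinuousLinearEquiv.continuous, ?_, ?_⟩
  · rw [interior_image_linearEquiv]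
    exact hint.image T
  · conv_lhs => rw [hsymm]
    simp [← image_neg_eq_neg, image_image]

lemma IsCSCD.exists_max_abs_wedge {K : Set (ℝ × ℝ)} (hK : IsCSCD K) :
    ∃ a ∈ K, ∃ b ∈ K, wedge a b ≠ 0 ∧ ∀ x ∈ K, ∀ y ∈ K, |wedge x y| ≤ |wedge a b| := by
  obtain ⟨ε, hε, hball⟩ := Metric.mem_nhds_iff.mp (mem_interior_iff_mem_nhds.mp hK.zero_mem_interior)
  have hmem : ∀ p : ℝ × ℝ, |p.1| < ε → |p.2| < ε → p ∈ K := fun p h1 h2 =>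
    hball (by simpa [Prod.norm_def] using And.intro h1 h2)
  have hx : (ε / 2, (0 : ℝ)) ∈ K := hmem _ (by rw [abs_of_pos (half_pos hε)]; linarith) (by simpa)
  have hy : ((0 : ℝ), ε / 2) ∈ K := hmem _ (by simpa) (by rw [abs_of_pos (half_pos hε)]; linarith)
  obtain ⟨⟨a, b⟩, ⟨ha, hb⟩, hmax⟩ := (hK.2.1.prod hK.2.1).exists_isMaxOn ⟨_, mk_mem_prod hx hy⟩
    (show Continuous fun q : (ℝ × ℝ) × (ℝ × ℝ) => |wedge q.1 q.2| by
      unfold wedge; fun_prop).continuousOn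
  refine ⟨a, ha, b, hb, fun hab => ?_, fun x hx y hy => hmax (mk_mem_prod hx hy)⟩
  have hle : |wedge (ε / 2, 0) (0, ε / 2)| ≤ |wedge a b| := hmax (mk_mem_prod hx hy)
  rw [hab, abs_zero, abs_nonpos_iff] at hle
  exact hε.ne' (by simpa [wedge] using hle)

lemma IsCSCD.exists_linearEquiv_normalized {K : Set (ℝ × ℝ)} (hK : IsCSCD K) :
    ∃ T : (ℝ × ℝ) ≃ₗ[ℝ] ℝ × ℝ, (1, 0) ∈ T '' K ∧ (0, 1) ∈ T '' K ∧
      ∀ x ∈ T '' K, ∀ y ∈ T '' K, |wedge x y| ≤ 1 := by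
  obtain ⟨a, ha, b, hb, hab, hmax⟩ := hK.exists_max_abs_wedge
  set T := (pairEquiv a b hab).symm
  have hTa : T a = (1, 0) := by simp [T, LinearEquiv.symm_apply_eq]
  have hTb : T b = (0, 1) := by simp [T, LinearEquiv.symm_apply_eq]
  have hdet : |LinearMap.det (T : (ℝ × ℝ) →ₗ[ℝ] ℝ × ℝ)| * |wedge a b| = 1 := by
    rw [← abs_mul, ← wedge_map]
    simp [hTa, hTb, wedge]
  refine ⟨T, ⟨a, ha, hTa⟩, ⟨b, hb, hTb⟩, ?_⟩
  rintro _ ⟨x, hx, rfl⟩ _ ⟨y, hy, rfl⟩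
  rw [← LinearEquiv.coe_coe, wedge_map, abs_mul, ← hdet]
  exact mul_le_mul_of_nonneg_left (hmax x hx y hy) (abs_nonneg _)

lemma closedBall_half_subset_of_mem {K : Set (ℝ × ℝ)} (hconv : Convex ℝ K) (hsymm : K = -K)
    (h₁ : ((1 : ℝ), (0 : ℝ)) ∈ K) (h₂ : ((0 : ℝ), (1 : ℝ)) ∈ K) : closedBall 0 (1 / 2) ⊆ K := by
  have hbal : Balanced ℝ K := (balanced_iff_neg_mem hconv).2 fun x hx => by
    rw [hsymm]; simpa using hx
  intro p hp
  rw [mem_closedBall_zero_iff, Prod.norm_def, max_le_iff, Real.norm_eq_abs, Real.norm_eq_abs] at hp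
  have hp₁ : (2 * p.1) • ((1 : ℝ), (0 : ℝ)) ∈ K :=
    hbal.smul_mem (by rw [Real.norm_eq_abs, abs_mul]; norm_num; linarith [hp.1]) h₁
  have hp₂ : (2 * p.2) • ((0 : ℝ), (1 : ℝ)) ∈ K :=
    hbal.smul_mem (by rw [Real.norm_eq_abs, abs_mul]; norm_num; linarith [hp.2]) h₂
  convert hconv hp₁ hp₂ one_half_pos.le one_half_pos.le (add_halves 1) using 1
  ext <;> simp

lemma subset_closedBall_one_of_abs_wedge_le {K : Set (ℝ × ℝ)} (h₁ : ((1 : ℝ), (0 : ℝ)) ∈ K)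
    (h₂ : ((0 : ℝ), (1 : ℝ)) ∈ K) (hK : ∀ x ∈ K, ∀ y ∈ K, |wedge x y| ≤ 1) :
    K ⊆ closedBall 0 1 := fun x hx => by
  rw [mem_closedBall_zero_iff, Prod.norm_def, Real.norm_eq_abs, Real.norm_eq_abs]
  exact max_le (by simpa [wedge] using hK x hx _ h₂) (by simpa [wedge] using hK _ h₁ x hx)

namespace TopologicalSpace.NonemptyCompacts

section Topological

variable {α : Type*} [TopologicalSpace α] [T2Space α]

lemma isClosed_setOf_subset :
    IsClosed {p : NonemptyCompacts α × NonemptyCompacts α | (p.1 : Set α) ⊆ p.2} := by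
  convert isClosed_eq (f := fun p : NonemptyCompacts α × NonemptyCompacts α => p.1 ⊔ p.2)
    continuous_sup continuous_snd using 1
  ext p
  simp

lemma isClosed_setOf_image_prod_subset {f : α × α → α} (hf : Continuous f) :
    IsClosed {K : NonemptyCompacts α | f '' ((K : Set α) ×ˢ K) ⊆ K} :=
  isClosed_setOf_subset.preimage ((hf.nonemptyCompacts_map.comp
    (continuous_prod.comp (continuous_id.prodMk continuous_id))).prodMk continuous_id)

lemma isClosed_setOf_superset (s : Set α) : IsClosed {K : NonemptyCompacts α | s ⊆ K} := by
  simp only [subset_def, ofPred_forall]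
  exact isClosed_biInter fun x _ => by
    simpa using isClosed_inter_nonempty_of_isClosed (isClosed_singleton (x := x))

lemma isClosed_setOf_eq_neg [InvolutiveNeg α] [ContinuousNeg α] :
    IsClosed {K : NonemptyCompacts α | (K : Set α) = -K} := by
  convert isClosed_eq continuous_id (continuous_neg (G := α)).nonemptyCompacts_map using 1
  ext K
  simp [NonemptyCompacts.ext_iff]

end Topological

lemma exists_dist_lt_of_dist_lt {α : Type*} [MetricSpace α] {A B : NonemptyCompacts α} {ε : ℝ}
    (h : dist A B < ε) {x : α} (hx : x ∈ A) : ∃ y ∈ B, dist x y < ε :=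
  exists_dist_lt_of_hausdorffDist_lt hx (by rwa [NonemptyCompacts.dist_eq] at h)
    (hausdorffEDist_ne_top_of_nonempty_of_bounded A.nonempty B.nonempty
      A.isCompact.isBounded B.isCompact.isBounded)

section Normed

variable {E : Type*} [NormedAddCommGroup E] [NormedSpace ℝ E]

lemma isClosed_setOf_convex : IsClosed {K : NonemptyCompacts E | Convex ℝ (K : Set E)} := by
  have : {K : NonemptyCompacts E | Convex ℝ (K : Set E)} =
      ⋂ (a : ℝ) (b : ℝ) (_ : 0 ≤ a ∧ 0 ≤ b ∧ a + b = 1),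
        {K : NonemptyCompacts E | (fun p : E × E => a • p.1 + b • p.2) '' ((K : Set E) ×ˢ K) ⊆ K} := by
    ext K
    simp only [Convex, StarConvex, mem_ofPred_eq, mem_iInter, image_subset_iff, prod_subset_iff,
      mem_preimage]
    exact ⟨fun h a b hab x hx y hy => h hx hy hab.1 hab.2.1 hab.2.2,
      fun h x hx y hy a b ha hb hab => h a b ⟨ha, hb, hab⟩ x hx y hy⟩
  rw [this]
  exact isClosed_iInter fun a => isClosed_iInter fun b => isClosed_iInter fun _ =>
    isClosed_setOf_image_prod_subset (by fun_prop)

lemma subset_smul_of_dist_lt {A B : NonemptyCompacts E} (hB : Convex ℝ (B : Set E)) {r : ℝ}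
    (hr : 0 < r) (hball : closedBall (0 : E) r ⊆ B) {ε : ℝ} (h : dist A B < ε) :
    (A : Set E) ⊆ (1 + ε / r) • (B : Set E) := by
  have hε : 0 ≤ ε / r := div_nonneg (dist_nonneg.trans h.le) hr.le
  intro x hx
  obtain ⟨y, hy, hxy⟩ := exists_dist_lt_of_dist_lt h hx
  have hdiff : x - y ∈ (ε / r) • (B : Set E) := by
    refine smul_set_mono hball ?_
    rw [smul_closedBall _ _ hr.le, smul_zero, Real.norm_of_nonneg hε, div_mul_cancel₀ _ hr.ne',
      mem_closedBall_zero_iff, ← dist_eq_norm]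
    exact hxy.le
  rw [hB.add_smul zero_le_one hε, one_smul]
  exact ⟨y, hy, x - y, hdiff, add_sub_cancel y x⟩

end Normed

end TopologicalSpace.NonemptyCompacts

section Minimization

open NonemptyCompacts

/-- For the sup norm of `ℝ × ℝ` the two balls are the squares `[-1/2, 1/2]²` and `[-1, 1]²`. -/
def normalizedDomains : Set (NonemptyCompacts (ℝ × ℝ)) :=
  {K | Convex ℝ (K : Set (ℝ × ℝ)) ∧ (K : Set (ℝ × ℝ)) = -K ∧
    closedBall 0 (1 / 2) ⊆ (K : Set (ℝ × ℝ)) ∧ (K : Set (ℝ × ℝ)) ⊆ closedBall 0 1}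

lemma isCompact_normalizedDomains : IsCompact normalizedDomains :=
  (isCompact_subsets_of_isCompact (isCompact_closedBall 0 1)).of_isClosed_subset
    (isClosed_setOf_convex.inter (isClosed_setOf_eq_neg.inter
      ((isClosed_setOf_superset _).inter (isClosed_subsets_of_isClosed isClosed_closedBall))))
    fun _ hK => hK.2.2.2

lemma closedBall_mem_normalizedDomains :
    (⟨⟨closedBall 0 1, isCompact_closedBall 0 1⟩, nonempty_closedBall.mpr zero_le_one⟩ :
      NonemptyCompacts (ℝ × ℝ)) ∈ normalizedDomains :=
  ⟨convex_closedBall 0 1, by simp, closedBall_subset_closedBall (by norm_num), subset_rfl⟩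

lemma isCSCD_of_mem_normalizedDomains {K : NonemptyCompacts (ℝ × ℝ)} (hK : K ∈ normalizedDomains) :
    IsCSCD (K : Set (ℝ × ℝ)) :=
  ⟨hK.1, K.isCompact, ⟨0, interior_mono hK.2.2.1 (by simp [interior_closedBall])⟩, hK.2.1⟩

lemma IsCSCD.exists_mem_normalizedDomains {K : Set (ℝ × ℝ)} (hK : IsCSCD K) :
    ∃ L ∈ normalizedDomains, deltaLat (L : Set (ℝ × ℝ)) = deltaLat K := by
  obtain ⟨T, h₁, h₂, hwedge⟩ := hK.exists_linearEquiv_normalized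
  obtain ⟨hconv, hcomp, hint, hsymm⟩ := hK.image T
  refine ⟨⟨⟨T '' K, hcomp⟩, hint.mono interior_subset⟩, ⟨hconv, hsymm, ?_, ?_⟩, deltaLat_image T K⟩
  · exact closedBall_half_subset_of_mem hconv hsymm h₁ h₂
  · exact subset_closedBall_one_of_abs_wedge_le h₁ h₂ hwedge

lemma abs_deltaLat_sub_le {K L : NonemptyCompacts (ℝ × ℝ)} (hK : K ∈ normalizedDomains)
    (hL : L ∈ normalizedDomains) {ε : ℝ} (h : dist K L < ε) :
    |deltaLat (K : Set (ℝ × ℝ)) - deltaLat L| ≤ (1 + 2 * ε) ^ 4 - 1 := by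
  have hε : 0 ≤ ε := dist_nonneg.trans h.le
  have hc : 1 + ε / (1 / 2) = 1 + 2 * ε := by ring
  have hKL := subset_smul_of_dist_lt hL.1 one_half_pos hL.2.2.1 h
  have hLK := subset_smul_of_dist_lt hK.1 one_half_pos hK.2.2.1 (dist_comm K L ▸ h)
  rw [hc] at hKL hLK
  have h₁ := deltaLat_le_pow_four_mul hL.1 L.isCompact.isBounded (by positivity) hKL hLK
  have h₂ := deltaLat_le_pow_four_mul hK.1 K.isCompact.isBounded (by positivity) hLK hKL
  have hK₁ := deltaLat_le_one hK.1
  have hL₁ := deltaLat_le_one hL.1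
  have hpow : 1 ≤ (1 + 2 * ε) ^ 4 := one_le_pow₀ (by linarith)
  rw [abs_sub_le_iff]
  constructor <;> nlinarith [deltaLat_nonneg (K : Set (ℝ × ℝ)), deltaLat_nonneg (L : Set (ℝ × ℝ))]

lemma continuousOn_deltaLat :
    ContinuousOn (fun K : NonemptyCompacts (ℝ × ℝ) => deltaLat (K : Set (ℝ × ℝ)))
      normalizedDomains := by
  rw [Metric.continuousOn_iff]
  intro L hL ε hε
  refine ⟨min 1 (ε / 100), by positivity, fun K hK hKL => ?_⟩
  have hδ₁ : min 1 (ε / 100) ≤ 1 := min_le_left _ _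
  have hδε : min 1 (ε / 100) ≤ ε / 100 := min_le_right _ _
  have hδ₀ : 0 < min 1 (ε / 100) := by positivity
  rw [Real.dist_eq]
  refine (abs_deltaLat_sub_le hK hL hKL).trans_lt ?_
  -- `(1 + 2δ)⁴ - 1 ≤ 80δ` for `0 < δ ≤ 1`
  nlinarith [pow_pos hδ₀ 2, pow_pos hδ₀ 3, mul_le_mul_of_nonneg_left hδ₁ hδ₀.le]

end Minimization

/-- There exists a centrally symmetric convex domain `K₀` realizing the lower
bound `δ_min`: `δ_lat(K₀) ≤ δ_lat(K)` for every centrally symmetric convex domain `K`. -/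
theorem exists_miserly_domain :
    ∃ K₀ : Set (ℝ × ℝ), IsCSCD K₀ ∧ ∀ K : Set (ℝ × ℝ), IsCSCD K → deltaLat K₀ ≤ deltaLat K := by
  obtain ⟨K₀, hK₀, hmin⟩ := isCompact_normalizedDomains.exists_isMinOn
    ⟨_, closedBall_mem_normalizedDomains⟩ continuousOn_deltaLat
  refine ⟨K₀, isCSCD_of_mem_normalizedDomains hK₀, fun K hK => ?_⟩
  obtain ⟨L, hL, hLK⟩ := hK.exists_mem_normalizedDomains
  exact hLK ▸ hmin hL
end
end

section
/- Let a, b, c be real numbers satisfying the star conditions √3·|a| < c and 3b + c < 0, let X be the 2×2 real matrix with rows (a, b) and (c, −a), and let Y be any trace-zero real 2×2 matrix. Let u*_j = (cos(πj/3), sin(πj/3)) for j ∈ ℤ/6ℤ, and for each j set κ_j = (X u*_j) ∧ ((Y + X²) u*_j), where v ∧ w denotes the determinant of the 2×2 matrix with columns v and w. If κ₀ = 0 and κ₂ = 0, then κ₄ = 3√3 (a² + bc)² / (3a + √3 c), and this quantity is strictly positive. -/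
noncomputable section

/-- The action of a 2×2 real matrix on the plane `ℝ × ℝ`. -/
def matAct (M : Matrix (Fin 2) (Fin 2) ℝ) (p : ℝ × ℝ) : ℝ × ℝ :=
  (M 0 0 * p.1 + M 0 1 * p.2, M 1 0 * p.1 + M 1 1 * p.2)

/-- The sixth roots of unity `u*_j = (cos(πj/3), sin(πj/3))`. -/
def ustar (n : ℕ) : ℝ × ℝ :=
  (Real.cos (Real.pi * n / 3), Real.sin (Real.pi * n / 3))

set_option maxHeartbeats 1600000 in
/-- Let `X = ![![a,b],![c,-a]]` satisfy the star conditions, let `Y` be any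
trace-zero matrix, and set `κ n = (X u*_n) ∧ ((Y + X²) u*_n)`.  If `κ 0 = 0` and
`κ 2 = 0`, then `κ 4 = 3√3 (a² + bc)²/(3a + √3 c) > 0`. -/
theorem curvature_not_all_zero (a b c : ℝ) (Y : Matrix (Fin 2) (Fin 2) ℝ)
    (hstar1 : Real.sqrt 3 * |a| < c) (hstar2 : 3 * b + c < 0)
    (hY : Matrix.trace Y = 0)
    (X : Matrix (Fin 2) (Fin 2) ℝ) (hX : X = !![a, b; c, -a])
    (κ : ℕ → ℝ)
    (hκ : ∀ n, κ n = wedge (matAct X (ustar n)) (matAct (Y + X * X) (ustar n)))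
    (h0 : κ 0 = 0) (h2 : κ 2 = 0) :
    κ 4 = 3 * Real.sqrt 3 * (a ^ 2 + b * c) ^ 2 / (3 * a + Real.sqrt 3 * c) ∧
      0 < κ 4 := by
  set s : ℝ := Real.sqrt 3 with hsdef
  have hs : s ^ 2 = 3 := Real.sq_sqrt (by norm_num)
  have hspos : (0:ℝ) < s := Real.sqrt_pos.mpr (by norm_num)
  have hc : 0 < c := lt_of_le_of_lt (by positivity) hstar1
  -- 3|a| < s*c, hence 3a + s*c > 0
  have h3a : 3 * |a| < s * c := by
    have := mul_lt_mul_of_pos_left hstar1 hspos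
    nlinarith [this, hs]
  have hden : 0 < 3 * a + s * c := by
    have := le_abs_self a
    have := neg_abs_le a
    nlinarith [h3a]
  -- discriminant is negative: a² + bc < 0
  have hd : a ^ 2 + b * c < 0 := by
    have h1 : s * |a| * (s * |a|) < c * c :=
      mul_self_lt_mul_self (by positivity) hstar1
    have h2' : 3 * a ^ 2 < c ^ 2 := by
      nlinarith [h1, hs, sq_abs a]
    have h3 : b < -c / 3 := by linarith
    nlinarith [mul_lt_mul_of_pos_right h3 hc]
  -- matrix entries
  have h11 : Y 1 1 = -Y 0 0 := by
    have : Y 0 0 + Y 1 1 = 0 := by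
      simpa [Matrix.trace_fin_two] using hY
    linarith
  set p : ℝ := Y 0 0 with hp
  set q : ℝ := Y 0 1 with hq
  set r : ℝ := Y 1 0 with hr
  -- trig values
  have e2 : Real.pi * ((2:ℕ):ℝ) / 3 = Real.pi - Real.pi / 3 := by push_cast; ring
  have e4 : Real.pi * ((4:ℕ):ℝ) / 3 = Real.pi + Real.pi / 3 := by push_cast; ring
  have hU0 : ustar 0 = (1, 0) := by
    simp [ustar]
  have hU2 : ustar 2 = (-(1/2), s/2) := by
    rw [ustar, e2, Real.cos_pi_sub, Real.sin_pi_sub, Real.cos_pi_div_three,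
      Real.sin_pi_div_three, hsdef]
  have hU4 : ustar 4 = (-(1/2), -(s/2)) := by
    rw [ustar, e4, Real.cos_add, Real.sin_add, Real.cos_pi, Real.sin_pi,
      Real.cos_pi_div_three, Real.sin_pi_div_three, hsdef]
    norm_num
  -- the matrix Y + X * X entrywise
  have hM : Y + X * X = !![p + (a^2 + b*c), q; r, -p + (a^2 + b*c)] := by
    rw [hX]
    ext i j
    rw [Matrix.add_apply]
    fin_cases i <;> fin_cases j <;>
      simp [Matrix.mul_fin_two, ← hp, ← hq, ← hr, h11] <;> ring
  -- unfold κ at 0, 2, 4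
  have h0' := (hκ 0).symm.trans h0
  have h2' := (hκ 2).symm.trans h2
  have h4' := hκ 4
  rw [hU0, hM, hX] at h0'
  rw [hU2, hM, hX] at h2'
  rw [hU4, hM, hX] at h4'
  simp only [wedge, matAct, Matrix.of_apply, Matrix.cons_val', Matrix.cons_val_zero,
    Matrix.cons_val_one, Matrix.head_cons, Matrix.empty_val',
    Matrix.cons_val_fin_one, Matrix.head_fin_const] at h0' h2' h4'
  -- the key algebraic identity
  have key : (3 * a + s * c) * κ 4 = 3 * s * (a ^ 2 + b * c) ^ 2 := by
    have hne : (3 * a + s * c) ^ 2 ≠ 0 := pow_ne_zero 2 (ne_of_gt hden)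
    apply mul_left_cancel₀ hne
    rw [h4']
    linear_combination
      ((3/2:ℝ)*c^3*s + (9/2:ℝ)*b*c^2*s + (9/2:ℝ)*a*c^2 + (3/2:ℝ)*a*c^2*s^2 +
        (27/2:ℝ)*a*b*c + (9/2:ℝ)*a*b*c*s^2 + (9/2:ℝ)*a^2*c*s + (27/2:ℝ)*a^2*b*s) * h0' +
      ((-3:ℝ)*c^3*s + (-9:ℝ)*a*c^2 + (9:ℝ)*a^2*c*s + (27:ℝ)*a^3) * h2' +
      ((-1/4:ℝ)*c^4*q*s^2 + (-1/4:ℝ)*c^4*p*s + (1/4:ℝ)*b*c^3*r*s^2 +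
        (-3/2:ℝ)*b*c^3*p*s + (-1/4:ℝ)*b*c^3*p*s^3 + (-1/4:ℝ)*b*c^5*s +
        (-3/2:ℝ)*b^2*c^4*s + (1/4:ℝ)*b^2*c^4*s^3 + (1/4:ℝ)*a*c^3*r*s +
        (-3/4:ℝ)*a*c^3*q*s + (1/4:ℝ)*a*c^3*q*s^3 + (-3/4:ℝ)*a*c^3*p +
        (9/4:ℝ)*a*b*c^2*r*s + (-9/2:ℝ)*a*b*c^2*p + (-9/4:ℝ)*a*b*c^2*p*s^2 +
        (-3/4:ℝ)*a*b*c^4 + (1/2:ℝ)*a*b*c^4*s^2 + (-9/2:ℝ)*a*b^2*c^3 +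
        (9/4:ℝ)*a*b^2*c^3*s^2 + (3/4:ℝ)*a^2*c^2*r + (9/4:ℝ)*a^2*c^2*q*s^2 +
        (-1/4:ℝ)*a^2*c^4*s + (9/2:ℝ)*a^2*b*c*r + (-9/2:ℝ)*a^2*b*c*p*s +
        (1/4:ℝ)*a^2*b*c^3*s^3 + (9/2:ℝ)*a^2*b^2*c^2*s + (9/2:ℝ)*a^3*c*q*s +
        (-3/4:ℝ)*a^3*c^3 + (1/2:ℝ)*a^3*c^3*s^2 + (-9/2:ℝ)*a^3*b*c^2 +
        (9/4:ℝ)*a^3*b*c^2*s^2 + (3/2:ℝ)*a^4*c^2*s + (9/2:ℝ)*a^4*b*c*s) * hs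
  have hval : κ 4 = 3 * s * (a ^ 2 + b * c) ^ 2 / (3 * a + s * c) := by
    rw [eq_div_iff (ne_of_gt hden)]
    linear_combination key
  refine ⟨hval, ?_⟩
  rw [hval]
  have hd2 : 0 < (a ^ 2 + b * c) ^ 2 := pow_pos (by nlinarith : 0 < -(a^2+b*c)) 2 |>.trans_le (by nlinarith)
  apply div_pos _ hden
  positivity
end
end

section
/- The density of the smoothed octagon: let a = 12^{1/4}/√(4 − √2), k = √3/(2a²), t₀ = −1/√2, t₁ = −1/2, and I = a²·((1−k)·(1/t₀ − 1/t₁) + (t₁ − t₀) − (1−k)·ln(t₀/t₁)). Then 8·I/√12 = (8 − √32 − ln 2)/(√8 − 1). -/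
/-!
With `k = √3/(2a²)` the factor `a²(1 - k)` collapses to `a² - √3/2`, so the link area is
`(a² - √3/2)(1/t₀ - 1/t₁ - ln(t₀/t₁)) + a²(t₁ - t₀)`. At the octagon's parameters
`a² = 2√3/(4 - √2)`, `1/t₀ - 1/t₁ = 2 - √2`, `t₁ - t₀ = (√2 - 1)/2` and `ln(t₀/t₁) = ln 2 / 2`;
the factor `√3` then cancels against `√12 = 2√3`, and dividing numerator and denominator by `√2`
gives the closed form.
-/

open Real

lemma Real.sqrt_sq_mul {c : ℝ} (hc : 0 ≤ c) (x : ℝ) : √(c ^ 2 * x) = c * √x := by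
  rw [Real.sqrt_mul (sq_nonneg c), Real.sqrt_sq hc]

lemma Real.rpow_one_div_four_sq {x : ℝ} (hx : 0 ≤ x) : (x ^ (1 / 4 : ℝ)) ^ 2 = √x := by
  rw [← Real.rpow_natCast, ← Real.rpow_mul hx, Real.sqrt_eq_rpow]
  norm_num

lemma link_area_eq {a k t₀ t₁ : ℝ} (ha : a ≠ 0) (hk : k = √3 / (2 * a ^ 2)) :
    a ^ 2 * ((1 - k) * (1 / t₀ - 1 / t₁) + (t₁ - t₀) - (1 - k) * log (t₀ / t₁)) =
      (a ^ 2 - √3 / 2) * (1 / t₀ - 1 / t₁ - log (t₀ / t₁)) + a ^ 2 * (t₁ - t₀) := by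
  subst hk
  field_simp
  ring

lemma sqrt_two_lt_four : √2 < 4 := by
  rw [Real.sqrt_lt' (by norm_num)]
  norm_num

lemma octagon_scale_sq : ((12 : ℝ) ^ ((1 : ℝ) / 4) / √(4 - √2)) ^ 2 = 2 * √3 / (4 - √2) := by
  rw [div_pow, Real.rpow_one_div_four_sq (by norm_num),
    Real.sq_sqrt (by linarith [sqrt_two_lt_four]), show (12 : ℝ) = 2 ^ 2 * 3 by norm_num, Real.sqrt_sq_mul zero_le_two]

lemma log_neg_inv_sqrt_two_div_neg_half : log (-(1 / √2) / -(1 / 2)) = log 2 / 2 := by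
  have hsqrt : -(1 / √2) / -(1 / 2) = √2 := by
    rw [neg_div_neg_eq, div_div_eq_mul_div, div_one, one_div_mul_eq_div, div_sqrt]
  rw [hsqrt, Real.log_sqrt zero_le_two]

/-- The density of the smoothed octagon: with square-representation parameters
`a = 12^(1/4)/√(4 - √2)`, `k = √3/(2a²)`, `t₀ = -1/√2`, `t₁ = -1/2`, and link
area `I = a²((1-k)(1/t₀ - 1/t₁) + (t₁ - t₀) - (1-k)·ln(t₀/t₁))`, the density
`8I/√12` equals `(8 - √32 - ln 2)/(√8 - 1)`. -/
theorem smoothed_octagon_density (a k t₀ t₁ I : ℝ)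
    (ha : a = (12 : ℝ) ^ ((1 : ℝ) / 4) / Real.sqrt (4 - Real.sqrt 2))
    (hk : k = Real.sqrt 3 / (2 * a ^ 2))
    (ht₀ : t₀ = -(1 / Real.sqrt 2)) (ht₁ : t₁ = -(1 / 2))
    (hI : I = a ^ 2 * ((1 - k) * (1 / t₀ - 1 / t₁) + (t₁ - t₀) -
      (1 - k) * Real.log (t₀ / t₁))) :
    8 * I / Real.sqrt 12 = (8 - Real.sqrt 32 - Real.log 2) / (Real.sqrt 8 - 1) := by
  have ha2 : a ^ 2 = 2 * √3 / (4 - √2) := ha ▸ octagon_scale_sq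
  have h4 : 0 < 4 - √2 := sub_pos.2 sqrt_two_lt_four
  have ha0 : a ≠ 0 := ha ▸ (div_pos (by positivity) (Real.sqrt_pos.2 h4)).ne'
  have h12 : √12 = 2 * √3 := by rw [← Real.sqrt_sq_mul zero_le_two]; norm_num
  have h32 : √32 = 4 * √2 := by rw [← Real.sqrt_sq_mul zero_le_four]; norm_num
  have h8 : √8 = 2 * √2 := by rw [← Real.sqrt_sq_mul zero_le_two]; norm_num
  rw [hI, link_area_eq ha0 hk, ht₀, ht₁, log_neg_inv_sqrt_two_div_neg_half, ha2, h12, h32, h8]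
  have h2 : √2 ^ 2 = 2 := Real.sq_sqrt zero_le_two
  have hden : 2 * √2 - 1 ≠ 0 := by nlinarith [Real.one_lt_sqrt_two]
  field_simp
  linear_combination (-32 * √2 ^ 2 + (48 - 16 * log 2) * √2 + 32) * h2
end
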